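/- The graph K_5 minus one edge (K_5^-) is a minor of the graph G_3; consequently G_3 is not a free-Hadwiger graph for k = 5. -/

import Mathlib

/-- `G₃`, the cube with one corner cut off: with vertices labelled
`x = 0, y = 1, z = 2, p = 3, q = 4, r = 5, w = 6`, its edges are
`xy, xz, yz, px, py, qx, qz, ry, rz, wp, wq, wr`. -/
def G3 : SimpleGraph (Fin 7) :=
  SimpleGraph.fromEdgeSet
    {s(0, 1), s(0, 2), s(1, 2), s(3, 0), s(3, 1), s(4, 0), s(4, 2),
     s(5, 1), s(5, 2), s(6, 3), s(6, 4), s(6, 5)}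

/-- `H` is a minor of `G`: there are disjoint connected branch sets in `G`, one for each
vertex of `H`, such that every edge of `H` is realized by an edge of `G` between the
corresponding branch sets. -/
def IsMinor {β α : Type*} (H : SimpleGraph β) (G : SimpleGraph α) : Prop :=
  ∃ f : α → Option β,
    (∀ b : β, ∃ a : α, f a = some b) ∧
    (∀ b : β, (G.induce {a : α | f a = some b}).Connected) ∧
    (∀ b₁ b₂ : β, H.Adj b₁ b₂ →
      ∃ a₁ a₂ : α, f a₁ = some b₁ ∧ f a₂ = some b₂ ∧ G.Adj a₁ a₂)

/-- `K₅` with one edge removed. -/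
def K5minus : SimpleGraph (Fin 5) :=
  (SimpleGraph.completeGraph (Fin 5)).deleteEdges {s(0, 1)}

/-- The graph obtained from `G` by adding the edge `{u, v}`. -/
def addEdge {α : Type*} (G : SimpleGraph α) (u v : α) : SimpleGraph α :=
  SimpleGraph.fromEdgeSet (insert s(u, v) G.edgeSet)

/-- `G` is a free-Hadwiger graph for `k = 5`: adding any edge to `G` still yields a graph
with no `K₅` minor (so `G` lies in the free class `Free(H₅)`). -/
def FreeHadwiger5 {α : Type*} (G : SimpleGraph α) : Prop :=
  ∀ u v : α, u ≠ v → ¬ IsMinor (SimpleGraph.completeGraph (Fin 5)) (addEdge G u v)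

/-! Contracting the path `p – w – r` of `G₃` to a single vertex leaves five branch sets
`{q}, {y}, {x}, {z}, {p, w, r}` (for the vertices `0, …, 4` of `K₅⁻`) that are pairwise
adjacent except for `{q}` and `{y}`: this is a `K₅⁻` model. Adding the edge `qy` completes it
to a `K₅` model, so `G₃` is not free-Hadwiger. -/

open SimpleGraph

structure IsMinorModel {β α : Type*} (H : SimpleGraph β) (G : SimpleGraph α)
    (f : α → Option β) : Prop where
  exists_eq_some : ∀ b : β, ∃ a : α, f a = some b
  connected : ∀ b : β, (G.induce {a : α | f a = some b}).Connected
  exists_adj : ∀ b₁ b₂ : β, H.Adj b₁ b₂ →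
    ∃ a₁ a₂ : α, f a₁ = some b₁ ∧ f a₂ = some b₂ ∧ G.Adj a₁ a₂

section IsMinorModel

variable {β α : Type*} {H : SimpleGraph β} {G : SimpleGraph α} {f : α → Option β}

theorem IsMinorModel.isMinor (hf : IsMinorModel H G f) : IsMinor H G :=
  ⟨f, hf.exists_eq_some, hf.connected, hf.exists_adj⟩

theorem IsMinorModel.sup_edge (hf : IsMinorModel H G f) {u v : α} {a b : β}
    (hu : f u = some a) (hv : f v = some b) :
    IsMinorModel (H ⊔ edge a b) (G ⊔ edge u v) f where
  exists_eq_some := hf.exists_eq_some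
  connected c := (hf.connected c).mono fun _ _ h => Or.inl h
  exists_adj := by
    rintro b₁ b₂ (h | h)
    · obtain ⟨a₁, a₂, h₁, h₂, hadj⟩ := hf.exists_adj b₁ b₂ h
      exact ⟨a₁, a₂, h₁, h₂, Or.inl hadj⟩
    · obtain ⟨hab, hne⟩ := (edge_adj _ _ _ _).1 h
      have hab' : a ≠ b := by
        rcases hab with ⟨rfl, rfl⟩ | ⟨rfl, rfl⟩
        exacts [hne, hne.symm]
      have huv : (G ⊔ edge u v).Adj u v := by
        refine Or.inr ((edge_adj _ _ _ _).2 ⟨Or.inl ⟨rfl, rfl⟩, ?_⟩)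
        rintro rfl
        exact hab' (Option.some_injective _ (hu.symm.trans hv))
      rcases hab with ⟨rfl, rfl⟩ | ⟨rfl, rfl⟩
      · exact ⟨u, v, hu, hv, huv⟩
      · exact ⟨v, u, hv, hu, huv.symm⟩

end IsMinorModel

theorem addEdge_eq_sup_edge {α : Type*} (G : SimpleGraph α) (u v : α) :
    addEdge G u v = G ⊔ edge u v := by
  ext x y
  simp only [addEdge, fromEdgeSet_adj, Set.mem_insert_iff, mem_edgeSet, sup_adj, edge_adj,
    Sym2.eq_iff]
  constructor
  · rintro ⟨h | h, hne⟩
    exacts [Or.inr ⟨h, hne⟩, Or.inl h]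
  · rintro (h | ⟨h, hne⟩)
    exacts [⟨Or.inr h, h.ne⟩, ⟨Or.inl h, hne⟩]

theorem deleteEdges_top_sup_edge {V : Type*} (a b : V) :
    (⊤ : SimpleGraph V).deleteEdges {s(a, b)} ⊔ edge a b = ⊤ := by
  ext x y
  simp only [sup_adj, deleteEdges_adj, top_adj, Set.mem_singleton_iff, edge_adj, Sym2.eq_iff]
  tauto

instance : DecidableRel G3.Adj := fun a b =>
  decidable_of_iff (s(a, b) ∈ ({s(0, 1), s(0, 2), s(1, 2), s(3, 0), s(3, 1), s(4, 0), s(4, 2),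
     s(5, 1), s(5, 2), s(6, 3), s(6, 4), s(6, 5)} : Finset (Sym2 (Fin 7))) ∧ a ≠ b)
    (by simp [G3, fromEdgeSet_adj])

instance : DecidableRel K5minus.Adj := fun a b =>
  decidable_of_iff (a ≠ b ∧ s(a, b) ≠ s(0, 1)) (by simp [K5minus, deleteEdges_adj, and_comm])

def g3Branch : Fin 7 → Option (Fin 5) :=
  ![some 2, some 1, some 3, some 4, some 0, some 4, some 4]

theorem isMinorModel_K5minus_G3 : IsMinorModel K5minus G3 g3Branch where
  exists_eq_some := by decide
  connected := by decide
  exists_adj := by decide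

/-- `K₅⁻` is a minor of `G₃`; consequently `G₃` is not a free-Hadwiger graph for `k = 5`. -/
theorem K5minus_isMinor_G3 : IsMinor K5minus G3 ∧ ¬ FreeHadwiger5 G3 := by
  refine ⟨isMinorModel_K5minus_G3.isMinor, fun hfree => hfree 4 1 (by decide) ?_⟩
  have hK5 : IsMinorModel (K5minus ⊔ edge 0 1) (G3 ⊔ edge 4 1) g3Branch :=
    isMinorModel_K5minus_G3.sup_edge rfl rfl
  rw [K5minus, deleteEdges_top_sup_edge] at hK5
  rw [addEdge_eq_sup_edge]
  exact hK5.isMinor
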